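/- Fix μ̄ ∈ L²([0,T]) and q₀ ∈ ℝ, and let J be the major agent's reduced objective J(ν) := −(κ₁κ₀/(2λ₁)) ⟨ν, 𝖦ν⟩_{L²} + (κ₁/(2λ₁)) ⟨ν, 𝖦μ̄⟩_{L²} + ∫₀^T Q^ν(t) μ̄(t) dt − λ₀ ‖ν‖²_{L²}, where Q^ν(t) := q₀ − ∫₀^t ν(s) ds. Let ν^{0,*} := (η/(2λ₀)) R𝟙 + R S μ̄ with η := 2λ₀ (q₀ − ⟨R S μ̄, 𝟙⟩_{L²}) / ⟨R𝟙, 𝟙⟩_{L²}. Then ν^{0,*} is the unique maximizer of J over the fuel-constrained admissible set {ν ∈ L²([0,T]) : ∫₀^T ν(t) dt = q₀}: it belongs to this set, J(ν^{0,*}) ≥ J(ν) for every ν in this set, and equality holds only if ν = ν^{0,*} almost everywhere. -/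

import Mathlib

noncomputable section
open MeasureTheory Set Filter
open scoped RealInnerProductSpace ENNReal NNReal

/-- The Lebesgue measure restricted to the interval `[0,T]`. -/
noncomputable def muT (T : ℝ) : MeasureTheory.Measure ℝ :=
  MeasureTheory.volume.restrict (Set.Icc 0 T)

/-- The real Hilbert space `L²([0,T])`. -/
abbrev HT (T : ℝ) : Type := MeasureTheory.Lp ℝ 2 (muT T)

section AuxLemmas

instance muT_finite (T : ℝ) : IsFiniteMeasure (muT T) := by
  constructor
  rw [muT, Measure.restrict_apply_univ, Real.volume_Icc]
  exact ENNReal.ofReal_lt_top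

lemma inner_HT (T : ℝ) (f g : HT T) : ⟪f, g⟫ = ∫ x, f x * g x ∂(muT T) := by
  rw [MeasureTheory.L2.inner_def]; simp [RCLike.inner_apply]; exact integral_congr_ae (Filter.Eventually.of_forall fun _ => mul_comm _ _)

lemma ae_memIcc (T : ℝ) : ∀ᵐ t ∂(muT T), t ∈ Icc (0:ℝ) T := by
  rw [muT]; exact ae_restrict_mem measurableSet_Icc

lemma ae_memIcc_prod (T : ℝ) : ∀ᵐ p ∂((muT T).prod (muT T)), p ∈ Icc (0:ℝ) T ×ˢ Icc (0:ℝ) T := by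
  rw [muT, Measure.prod_restrict]
  exact ae_restrict_mem (measurableSet_Icc.prod measurableSet_Icc)

/-- indicator of `u ≤ t` -/
def chi (u t : ℝ) : ℝ := if u ≤ t then 1 else 0

lemma chi_meas : Measurable (fun p : ℝ × ℝ => chi p.1 p.2) := by
  unfold chi
  exact Measurable.ite (measurableSet_le measurable_fst measurable_snd) measurable_const
    measurable_const

lemma chi_meas' : Measurable (fun p : ℝ × ℝ => chi p.2 p.1) :=
  chi_meas.comp (measurable_snd.prodMk measurable_fst)

lemma chi_abs_le (u t : ℝ) : |chi u t| ≤ 1 := by unfold chi; split <;> simp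

lemma chi_nonneg (u t : ℝ) : 0 ≤ chi u t := by unfold chi; split <;> simp

lemma inter_Iic (T t : ℝ) (ht : t ≤ T) : Icc (0:ℝ) T ∩ Iic t = Icc (0:ℝ) t := by
  ext u; simp only [mem_inter_iff, mem_Icc, mem_Iic]
  constructor
  · rintro ⟨⟨h1, _⟩, h3⟩; exact ⟨h1, h3⟩
  · rintro ⟨h1, h2⟩; exact ⟨⟨h1, h2.trans ht⟩, h2⟩

lemma inter_Ici (T s : ℝ) (hs : 0 ≤ s) : Icc (0:ℝ) T ∩ Ici s = Icc s T := by
  ext u; simp only [mem_inter_iff, mem_Icc, mem_Ici]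
  constructor
  · rintro ⟨⟨_, h2⟩, h3⟩; exact ⟨h3, h2⟩
  · rintro ⟨h1, h2⟩; exact ⟨⟨hs.trans h1, h2⟩, h1⟩

/-- `∫_{Icc 0 m} f` rewritten as an integral against `muT T` with an indicator. -/
lemma setInt_chi (T : ℝ) (f : ℝ → ℝ) (t : ℝ) (ht : t ∈ Icc (0:ℝ) T) :
    ∫ u, chi u t * f u ∂(muT T) = ∫ u in Icc (0:ℝ) t, f u := by
  have h1 : ∀ u, chi u t * f u = (Iic t).indicator f u := by
    intro u
    by_cases h : u ≤ t <;> simp [chi, h, Set.indicator_apply, mem_Iic]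
  rw [integral_congr_ae (Filter.Eventually.of_forall h1), muT,
    setIntegral_indicator measurableSet_Iic, inter_Iic T t ht.2]

/-- `∫_{Icc s T} f` rewritten as an integral against `muT T` with an indicator. -/
lemma setInt_chi' (T : ℝ) (f : ℝ → ℝ) (s : ℝ) (hs : s ∈ Icc (0:ℝ) T) :
    ∫ t, chi s t * f t ∂(muT T) = ∫ t in Icc s T, f t := by
  have h1 : ∀ t, chi s t * f t = (Ici s).indicator f t := by
    intro t
    by_cases h : s ≤ t <;> simp [chi, h, Set.indicator_apply, mem_Ici]
  rw [integral_congr_ae (Filter.Eventually.of_forall h1), muT,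
    setIntegral_indicator measurableSet_Ici, inter_Ici T s hs.1]

lemma chi_meas_left (t : ℝ) : Measurable (fun u => chi u t) :=
  chi_meas.comp (measurable_id.prodMk measurable_const)

lemma chi_meas_right (u : ℝ) : Measurable (fun t => chi u t) :=
  chi_meas.comp (measurable_const.prodMk measurable_id)

lemma integrable_fst_abs (T : ℝ) (g : ℝ → ℝ) (hg : Integrable g (muT T)) :
    Integrable (fun p : ℝ × ℝ => |g p.1|) ((muT T).prod (muT T)) := by
  have := hg.abs.mul_prod (integrable_const (μ := muT T) (1:ℝ))
  simpa using this

lemma intInt_eq_setInt (a m : ℝ) (h : a ≤ m) (f : ℝ → ℝ) :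
    ∫ u in a..m, f u = ∫ u in Icc a m, f u := by
  rw [intervalIntegral.integral_of_le h, ← integral_Icc_eq_integral_Ioc]

lemma aesm_P (T : ℝ) (m : ℝ → ℝ) (hm : Integrable m (muT T)) :
    AEStronglyMeasurable (fun t => ∫ u in Icc (0:ℝ) t, m u) (muT T) := by
  have h1 : AEStronglyMeasurable (fun p : ℝ × ℝ => chi p.2 p.1 * m p.2)
      ((muT T).prod (muT T)) :=
    (chi_meas'.aestronglyMeasurable).mul (AEStronglyMeasurable.comp_snd (μ := muT T) hm.1)
  have h2 := h1.integral_prod_right'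
  exact h2.congr ((ae_memIcc T).mono fun t ht => setInt_chi T m t ht)

lemma P_bound (T : ℝ) (m : ℝ → ℝ) (hm : Integrable m (muT T)) :
    ∀ t ∈ Icc (0:ℝ) T, |∫ u in Icc (0:ℝ) t, m u| ≤ ∫ u, |m u| ∂(muT T) := by
  intro t ht
  rw [← setInt_chi T m t ht]
  calc |∫ u, chi u t * m u ∂(muT T)| = ‖∫ u, chi u t * m u ∂(muT T)‖ :=
        (Real.norm_eq_abs _).symm
    _ ≤ ∫ u, ‖chi u t * m u‖ ∂(muT T) := norm_integral_le_integral_norm _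
    _ ≤ ∫ u, |m u| ∂(muT T) := by
        refine integral_mono_of_nonneg (Filter.Eventually.of_forall fun u => norm_nonneg _)
          hm.abs (Filter.Eventually.of_forall fun u => ?_)
        simp only [Real.norm_eq_abs, abs_mul]
        calc |chi u t| * |m u| ≤ 1 * |m u| :=
              mul_le_mul_of_nonneg_right (chi_abs_le u t) (abs_nonneg _)
          _ = |m u| := one_mul _

lemma Icc_split (T s : ℝ) (hs : s ∈ Icc (0:ℝ) T) (m : ℝ → ℝ) (hm : Integrable m (muT T)) :
    ∫ t in Icc s T, m t = (∫ t, m t ∂(muT T)) - ∫ u in Icc (0:ℝ) s, m u := by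
  have hm' : IntegrableOn m (Icc 0 T) volume := hm
  have h0s : IntegrableOn m (Ioc 0 s) volume :=
    hm'.mono_set (fun x hx => ⟨le_of_lt hx.1, hx.2.trans hs.2⟩)
  have hsT : IntegrableOn m (Ioc s T) volume :=
    hm'.mono_set (fun x hx => ⟨hs.1.trans (le_of_lt hx.1), hx.2⟩)
  have key : (∫ t, m t ∂(muT T)) = (∫ t in Ioc (0:ℝ) s, m t) + ∫ t in Ioc s T, m t := by
    have : (∫ t, m t ∂(muT T)) = ∫ t in Icc (0:ℝ) T, m t := rfl
    rw [this, integral_Icc_eq_integral_Ioc, ← Set.Ioc_union_Ioc_eq_Ioc hs.1 hs.2,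
      setIntegral_union (Set.Ioc_disjoint_Ioc_of_le le_rfl) measurableSet_Ioc h0s hsT]
  rw [integral_Icc_eq_integral_Ioc, integral_Icc_eq_integral_Ioc, key]
  ring

lemma third_term (T : ℝ) (nu m : ℝ → ℝ)
    (hnu : Integrable nu (muT T)) (hm : Integrable m (muT T)) :
    ∫ t, (∫ s in Icc (0:ℝ) t, nu s) * m t ∂(muT T)
      = (∫ s, nu s ∂(muT T)) * (∫ t, m t ∂(muT T))
        - ∫ s, nu s * (∫ u in Icc (0:ℝ) s, m u) ∂(muT T) := by
  have step1 : ∫ t, (∫ s in Icc (0:ℝ) t, nu s) * m t ∂(muT T)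
      = ∫ t, ∫ s, chi s t * nu s * m t ∂(muT T) ∂(muT T) := by
    refine integral_congr_ae ((ae_memIcc T).mono fun t ht => ?_)
    show (∫ s in Icc (0:ℝ) t, nu s) * m t = ∫ s, chi s t * nu s * m t ∂(muT T)
    rw [← setInt_chi T nu t ht, ← integral_mul_const]
  have hFint : Integrable (Function.uncurry fun t s => chi s t * nu s * m t)
      ((muT T).prod (muT T)) := by
    have hmeas : AEStronglyMeasurable (fun p : ℝ × ℝ => chi p.2 p.1 * nu p.2 * m p.1)
        ((muT T).prod (muT T)) :=
      ((chi_meas'.aestronglyMeasurable).mul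
        (AEStronglyMeasurable.comp_snd (μ := muT T) hnu.1)).mul
        (AEStronglyMeasurable.comp_fst (ν := muT T) hm.1)
    refine Integrable.mono' (hm.abs.mul_prod hnu.abs) hmeas
      (Filter.Eventually.of_forall fun p => ?_)
    simp only [Function.uncurry, Real.norm_eq_abs, abs_mul]
    calc |chi p.2 p.1| * |nu p.2| * |m p.1| ≤ 1 * |nu p.2| * |m p.1| := by
          gcongr; exact chi_abs_le _ _
      _ = |m p.1| * |nu p.2| := by ring
  have step2 : ∫ t, ∫ s, chi s t * nu s * m t ∂(muT T) ∂(muT T)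
      = ∫ s, ∫ t, chi s t * nu s * m t ∂(muT T) ∂(muT T) :=
    integral_integral_swap hFint
  have step3 : ∫ s, ∫ t, chi s t * nu s * m t ∂(muT T) ∂(muT T)
      = ∫ s, nu s * ((∫ t, m t ∂(muT T)) - ∫ u in Icc (0:ℝ) s, m u) ∂(muT T) := by
    refine integral_congr_ae ((ae_memIcc T).mono fun s hs => ?_)
    have h1 : ∀ t, chi s t * nu s * m t = nu s * (chi s t * m t) := fun t => by ring
    show ∫ t, chi s t * nu s * m t ∂(muT T)
        = nu s * ((∫ t, m t ∂(muT T)) - ∫ u in Icc (0:ℝ) s, m u)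
    rw [integral_congr_ae (Filter.Eventually.of_forall h1), integral_const_mul,
      setInt_chi' T m s hs, Icc_split T s hs m hm]
  have step4 : ∫ s, nu s * ((∫ t, m t ∂(muT T)) - ∫ u in Icc (0:ℝ) s, m u) ∂(muT T)
      = (∫ s, nu s ∂(muT T)) * (∫ t, m t ∂(muT T))
        - ∫ s, nu s * (∫ u in Icc (0:ℝ) s, m u) ∂(muT T) := by
    have h1 : ∀ s, nu s * ((∫ t, m t ∂(muT T)) - ∫ u in Icc (0:ℝ) s, m u)
        = nu s * (∫ t, m t ∂(muT T)) - nu s * (∫ u in Icc (0:ℝ) s, m u) := fun s => by ring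
    rw [integral_congr_ae (Filter.Eventually.of_forall h1), integral_sub
      (hnu.mul_const _) ?_, integral_mul_const]
    refine Integrable.mono' (hnu.abs.mul_const (∫ u, |m u| ∂(muT T)))
      (hnu.1.mul (aesm_P T m hm)) (((ae_memIcc T)).mono fun s hs => ?_)
    simp only [Real.norm_eq_abs, abs_mul]
    gcongr
    exact P_bound T m hm s hs
  rw [step1, step2, step3, step4]

lemma kernel_psd (T : ℝ) (hT : 0 ≤ T) (w g : ℝ → ℝ)
    (hw_meas : AEStronglyMeasurable w (muT T))
    (hw_nonneg : ∀ u ∈ Icc (0:ℝ) T, 0 ≤ w u)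
    (Cw : ℝ) (hw_bd : ∀ u ∈ Icc (0:ℝ) T, |w u| ≤ Cw)
    (hg : Integrable g (muT T)) :
    0 ≤ ∫ t, g t * ∫ s, (∫ u in Icc (0:ℝ) (min t s), w u) * g s ∂(muT T) ∂(muT T) := by
  have hCw0 : 0 ≤ Cw := le_trans (abs_nonneg _) (hw_bd 0 ⟨le_refl 0, hT⟩)
  set B : ℝ → ℝ := fun u => ∫ t, chi u t * g t ∂(muT T) with hB
  set Mg : ℝ := ∫ t, |g t| ∂(muT T) with hMg
  have hMg0 : 0 ≤ Mg := integral_nonneg fun t => abs_nonneg _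
  have hB_meas : AEStronglyMeasurable B (muT T) := by
    have h1 : AEStronglyMeasurable (fun p : ℝ × ℝ => chi p.1 p.2 * g p.2)
        ((muT T).prod (muT T)) :=
      (chi_meas.aestronglyMeasurable).mul (AEStronglyMeasurable.comp_snd (μ := muT T) hg.1)
    exact h1.integral_prod_right'
  have hB_bd : ∀ u, |B u| ≤ Mg := by
    intro u
    calc |B u| = ‖∫ t, chi u t * g t ∂(muT T)‖ := (Real.norm_eq_abs _).symm
      _ ≤ ∫ t, ‖chi u t * g t‖ ∂(muT T) := norm_integral_le_integral_norm _
      _ ≤ Mg := by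
          refine integral_mono_of_nonneg (Filter.Eventually.of_forall fun t => norm_nonneg _)
            hg.abs (Filter.Eventually.of_forall fun t => ?_)
          simp only [Real.norm_eq_abs, abs_mul]
          calc |chi u t| * |g t| ≤ 1 * |g t| :=
                mul_le_mul_of_nonneg_right (chi_abs_le u t) (abs_nonneg _)
            _ = |g t| := one_mul _
  -- Step A : kernel as an integral of indicators
  have stepA : ∀ t ∈ Icc (0:ℝ) T, ∀ s ∈ Icc (0:ℝ) T,
      (∫ u in Icc (0:ℝ) (min t s), w u) = ∫ u, chi u t * chi u s * w u ∂(muT T) := by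
    intro t ht s hs
    have hmin : min t s ∈ Icc (0:ℝ) T := ⟨le_min ht.1 hs.1, (min_le_left t s).trans ht.2⟩
    rw [← setInt_chi T w (min t s) hmin]
    refine integral_congr_ae (Filter.Eventually.of_forall fun u => ?_)
    unfold chi
    by_cases h1 : u ≤ t <;> by_cases h2 : u ≤ s <;>
      simp [h1, h2, le_min_iff]
  -- rewrite the target
  have step1 : ∫ t, g t * ∫ s, (∫ u in Icc (0:ℝ) (min t s), w u) * g s ∂(muT T) ∂(muT T)
      = ∫ t, g t * ∫ s, (∫ u, chi u t * chi u s * w u ∂(muT T)) * g s ∂(muT T) ∂(muT T) := by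
    refine integral_congr_ae ((ae_memIcc T).mono fun t ht => ?_)
    show g t * ∫ s, (∫ u in Icc (0:ℝ) (min t s), w u) * g s ∂(muT T)
        = g t * ∫ s, (∫ u, chi u t * chi u s * w u ∂(muT T)) * g s ∂(muT T)
    congr 1
    refine integral_congr_ae ((ae_memIcc T).mono fun s hs => ?_)
    show (∫ u in Icc (0:ℝ) (min t s), w u) * g s
        = (∫ u, chi u t * chi u s * w u ∂(muT T)) * g s
    rw [stepA t ht s hs]
  -- inner swap over (s,u)
  have step2 : ∀ t, ∫ s, (∫ u, chi u t * chi u s * w u ∂(muT T)) * g s ∂(muT T)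
      = ∫ u, (chi u t * w u) * B u ∂(muT T) := by
    intro t
    have e1 : ∫ s, (∫ u, chi u t * chi u s * w u ∂(muT T)) * g s ∂(muT T)
        = ∫ s, ∫ u, chi u t * chi u s * w u * g s ∂(muT T) ∂(muT T) := by
      refine integral_congr_ae (Filter.Eventually.of_forall fun s => ?_)
      show (∫ u, chi u t * chi u s * w u ∂(muT T)) * g s
          = ∫ u, chi u t * chi u s * w u * g s ∂(muT T)
      rw [← integral_mul_const]
    have hFint : Integrable (Function.uncurry fun s u => chi u t * chi u s * w u * g s)
        ((muT T).prod (muT T)) := by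
      have hmeas : AEStronglyMeasurable
          (fun p : ℝ × ℝ => chi p.2 t * chi p.2 p.1 * w p.2 * g p.1)
          ((muT T).prod (muT T)) := by
        refine (((Measurable.aestronglyMeasurable ?_).mul
            (chi_meas'.aestronglyMeasurable)).mul
            (AEStronglyMeasurable.comp_snd (μ := muT T) hw_meas)).mul
            (AEStronglyMeasurable.comp_fst (ν := muT T) hg.1)
        exact (chi_meas_left t).comp measurable_snd
      refine Integrable.mono' ((integrable_fst_abs T g hg).const_mul Cw) hmeas
        ((ae_memIcc_prod T).mono fun p hp => ?_)
      simp only [Function.uncurry, Real.norm_eq_abs, abs_mul]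
      calc |chi p.2 t| * |chi p.2 p.1| * |w p.2| * |g p.1|
          ≤ 1 * 1 * Cw * |g p.1| := by
            gcongr
            · exact chi_abs_le _ _
            · exact chi_abs_le _ _
            · exact hw_bd p.2 hp.2
        _ = Cw * |g p.1| := by ring
    have e2 := integral_integral_swap hFint
    have e3 : ∫ u, ∫ s, chi u t * chi u s * w u * g s ∂(muT T) ∂(muT T)
        = ∫ u, (chi u t * w u) * B u ∂(muT T) := by
      refine integral_congr_ae (Filter.Eventually.of_forall fun u => ?_)
      show ∫ s, chi u t * chi u s * w u * g s ∂(muT T) = (chi u t * w u) * B u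
      have h1 : ∀ s, chi u t * chi u s * w u * g s
          = (chi u t * w u) * (chi u s * g s) := fun s => by ring
      rw [integral_congr_ae (Filter.Eventually.of_forall h1), integral_const_mul]
    rw [e1, e2, e3]
  -- outer swap over (t,u)
  have step3 : ∫ t, g t * ∫ u, (chi u t * w u) * B u ∂(muT T) ∂(muT T)
      = ∫ u, w u * (B u * B u) ∂(muT T) := by
    have e1 : ∫ t, g t * ∫ u, (chi u t * w u) * B u ∂(muT T) ∂(muT T)
        = ∫ t, ∫ u, g t * ((chi u t * w u) * B u) ∂(muT T) ∂(muT T) := by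
      refine integral_congr_ae (Filter.Eventually.of_forall fun t => ?_)
      show g t * ∫ u, (chi u t * w u) * B u ∂(muT T)
          = ∫ u, g t * ((chi u t * w u) * B u) ∂(muT T)
      rw [integral_const_mul]
    have hFint : Integrable (Function.uncurry fun t u => g t * ((chi u t * w u) * B u))
        ((muT T).prod (muT T)) := by
      have hmeas : AEStronglyMeasurable
          (fun p : ℝ × ℝ => g p.1 * ((chi p.2 p.1 * w p.2) * B p.2))
          ((muT T).prod (muT T)) := by
        refine (AEStronglyMeasurable.comp_fst (ν := muT T) hg.1).mul
          ((((chi_meas'.aestronglyMeasurable)).mul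
            (AEStronglyMeasurable.comp_snd (μ := muT T) hw_meas)).mul
            (AEStronglyMeasurable.comp_snd (μ := muT T) hB_meas))
      refine Integrable.mono' ((integrable_fst_abs T g hg).mul_const (Cw * Mg)) hmeas
        ((ae_memIcc_prod T).mono fun p hp => ?_)
      simp only [Function.uncurry, Real.norm_eq_abs, abs_mul]
      calc |g p.1| * (|chi p.2 p.1| * |w p.2| * |B p.2|)
          ≤ |g p.1| * (1 * Cw * Mg) := by
            gcongr
            · exact chi_abs_le _ _
            · exact hw_bd p.2 hp.2
            · exact hB_bd p.2
        _ = |g p.1| * (Cw * Mg) := by ring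
    have e2 := integral_integral_swap hFint
    have e3 : ∫ u, ∫ t, g t * ((chi u t * w u) * B u) ∂(muT T) ∂(muT T)
        = ∫ u, w u * (B u * B u) ∂(muT T) := by
      refine integral_congr_ae (Filter.Eventually.of_forall fun u => ?_)
      show ∫ t, g t * ((chi u t * w u) * B u) ∂(muT T) = w u * (B u * B u)
      have h1 : ∀ t, g t * ((chi u t * w u) * B u)
          = (w u * B u) * (chi u t * g t) := fun t => by ring
      rw [integral_congr_ae (Filter.Eventually.of_forall h1), integral_const_mul]
      show w u * B u * B u = w u * (B u * B u)
      ring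
    rw [e1, e2, e3]
  have final : 0 ≤ ∫ u, w u * (B u * B u) ∂(muT T) := by
    refine integral_nonneg_of_ae ((ae_memIcc T).mono fun u hu => ?_)
    exact mul_nonneg (hw_nonneg u hu) (mul_self_nonneg _)
  calc (0:ℝ) ≤ ∫ u, w u * (B u * B u) ∂(muT T) := final
    _ = ∫ t, g t * ∫ u, (chi u t * w u) * B u ∂(muT T) ∂(muT T) := step3.symm
    _ = ∫ t, g t * ∫ s, (∫ u, chi u t * chi u s * w u ∂(muT T)) * g s ∂(muT T) ∂(muT T) := by
        refine integral_congr_ae (Filter.Eventually.of_forall fun t => ?_)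
        show g t * ∫ u, (chi u t * w u) * B u ∂(muT T)
            = g t * ∫ s, (∫ u, chi u t * chi u s * w u ∂(muT T)) * g s ∂(muT T)
        rw [step2 t]
    _ = _ := step1.symm

lemma sym_pairing (T : ℝ) (F : ℝ → ℝ → ℝ) (hsym : ∀ t s, F t s = F s t)
    (hmeas : AEStronglyMeasurable (fun p : ℝ × ℝ => F p.1 p.2) ((muT T).prod (muT T)))
    (CF : ℝ) (hbd : ∀ t ∈ Icc (0:ℝ) T, ∀ s ∈ Icc (0:ℝ) T, |F t s| ≤ CF)
    (g h : ℝ → ℝ) (hg : Integrable g (muT T)) (hh : Integrable h (muT T)) :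
    ∫ t, g t * ∫ s, F t s * h s ∂(muT T) ∂(muT T)
      = ∫ t, h t * ∫ s, F t s * g s ∂(muT T) ∂(muT T) := by
  have e1 : ∫ t, g t * ∫ s, F t s * h s ∂(muT T) ∂(muT T)
      = ∫ t, ∫ s, F t s * g t * h s ∂(muT T) ∂(muT T) := by
    refine integral_congr_ae (Filter.Eventually.of_forall fun t => ?_)
    show g t * ∫ s, F t s * h s ∂(muT T) = ∫ s, F t s * g t * h s ∂(muT T)
    rw [← integral_const_mul]
    refine integral_congr_ae (Filter.Eventually.of_forall fun s => ?_)
    show g t * (F t s * h s) = F t s * g t * h s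
    ring
  have hFint : Integrable (Function.uncurry fun t s => F t s * g t * h s)
      ((muT T).prod (muT T)) := by
    have hm2 : AEStronglyMeasurable (fun p : ℝ × ℝ => F p.1 p.2 * g p.1 * h p.2)
        ((muT T).prod (muT T)) :=
      (hmeas.mul (AEStronglyMeasurable.comp_fst (ν := muT T) hg.1)).mul
        (AEStronglyMeasurable.comp_snd (μ := muT T) hh.1)
    refine Integrable.mono' ((hg.abs.mul_prod hh.abs).const_mul CF) hm2
      ((ae_memIcc_prod T).mono fun p hp => ?_)
    simp only [Function.uncurry, Real.norm_eq_abs, abs_mul]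
    calc |F p.1 p.2| * |g p.1| * |h p.2| ≤ CF * |g p.1| * |h p.2| := by
          gcongr
          exact hbd p.1 hp.1 p.2 hp.2
      _ = CF * (|g p.1| * |h p.2|) := by ring
  have e2 := integral_integral_swap hFint
  have e3 : ∫ s, ∫ t, F t s * g t * h s ∂(muT T) ∂(muT T)
      = ∫ s, h s * ∫ t, F s t * g t ∂(muT T) ∂(muT T) := by
    refine integral_congr_ae (Filter.Eventually.of_forall fun s => ?_)
    show ∫ t, F t s * g t * h s ∂(muT T) = h s * ∫ t, F s t * g t ∂(muT T)
    rw [← integral_const_mul]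
    refine integral_congr_ae (Filter.Eventually.of_forall fun t => ?_)
    show F t s * g t * h s = h s * (F s t * g t)
    rw [hsym t s]; ring
  rw [e1, e2, e3]

end AuxLemmas

set_option maxHeartbeats 3000000 in
/-- The strategy `ν^{0,*} = (η/(2λ₀)) R𝟙 + RSμ̄`, with
`η = 2λ₀ (q₀ − ⟨RSμ̄, 𝟙⟩)/⟨R𝟙, 𝟙⟩`, is the unique maximizer of the major agent's
reduced objective `J` over the fuel-constrained admissible set
`{ν ∈ L²([0,T]) : ∫₀^T ν = q₀}`. -/
theorem major_agent_optimal_strategy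
    (T lam1 kap1 alpha : ℝ)
    (hT : 0 < T) (hlam1 : 0 < lam1) (hkap1 : 0 < kap1) (halpha : 0 < alpha)
    (hak : kap1 ≤ 2 * alpha)
    (phi : ℝ → ℝ)
    (hphi_nonneg : ∀ t ∈ Icc (0:ℝ) T, 0 ≤ phi t)
    (hphi_bdd : ∃ C : ℝ, ∀ t ∈ Icc (0:ℝ) T, |phi t| ≤ C)
    (hphi_pc : ∃ F : Set ℝ, F.Finite ∧ ContinuousOn phi (Icc (0:ℝ) T \ F))
    (r1 : ℝ → ℝ)
    (hr1_cont : ContinuousOn r1 (Icc (0:ℝ) T))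
    (hr1_eq : ∀ t ∈ Icc (0:ℝ) T,
      r1 t = -((2*alpha - kap1)/(2*lam1)) + ∫ s in t..T, (r1 s ^ 2 - phi s / lam1))
    (xip xim : ℝ → ℝ)
    (hxip : ∀ t, xip t = Real.exp (∫ s in (0:ℝ)..t, r1 s))
    (hxim : ∀ t, xim t = Real.exp (-∫ s in (0:ℝ)..t, r1 s))
    (K : ℝ → ℝ → ℝ) (hK : ∀ t s, K t s = xim t * xip s)
    (lam0 kap0 : ℝ) (hlam0 : 0 < lam0) (hkap0 : 0 < kap0)
    (G : ℝ → ℝ → ℝ) (hG : ∀ t s, G t s = ∫ u in (0:ℝ)..(min t s), K u t * K u s)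
    (c : ℝ) (hc : c = kap1 * kap0 / (2 * lam0 * lam1))
    (Gop : HT T →L[ℝ] HT T)
    (hGop : ∀ ψ : HT T, (Gop ψ : ℝ → ℝ) =ᵐ[muT T]
      fun t => ∫ s in Icc (0:ℝ) T, G t s * ψ s)
    (Rop : HT T →L[ℝ] HT T)
    (hRop_left : Rop ∘L (1 + c • Gop) = 1)
    (hRop_right : (1 + c • Gop) ∘L Rop = 1)
    (mu : ℝ → ℝ) (hmu : MeasureTheory.MemLp mu 2 (muT T))
    (q0 : ℝ)
    (Sfun : ℝ → ℝ)
    (hSfun : ∀ t, Sfun t = (1/(2*lam0)) * (∫ s in Icc (0:ℝ) t, mu s) +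
      (kap1/(4*lam1*lam0)) * ∫ s in Icc (0:ℝ) T, G t s * mu s)
    (hSfun_mem : MeasureTheory.MemLp Sfun 2 (muT T))
    (oneH : HT T) (honeH : (oneH : ℝ → ℝ) =ᵐ[muT T] fun _ => (1:ℝ))
    (SH : HT T) (hSH : (SH : ℝ → ℝ) =ᵐ[muT T] Sfun)
    (J : (ℝ → ℝ) → ℝ)
    (hJ : ∀ ν : ℝ → ℝ, J ν =
      -(kap1*kap0/(2*lam1)) *
          (∫ t in Icc (0:ℝ) T, ν t * ∫ s in Icc (0:ℝ) T, G t s * ν s)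
        + (kap1/(2*lam1)) *
          (∫ t in Icc (0:ℝ) T, ν t * ∫ s in Icc (0:ℝ) T, G t s * mu s)
        + (∫ t in Icc (0:ℝ) T, (q0 - ∫ s in Icc (0:ℝ) t, ν s) * mu t)
        - lam0 * ∫ t in Icc (0:ℝ) T, (ν t)^2) :
    ∀ eta : ℝ, eta = 2 * lam0 * (q0 - ⟪Rop SH, oneH⟫) / ⟪Rop oneH, oneH⟫ →
      ∃ v : ℝ → ℝ, MeasureTheory.MemLp v 2 (muT T) ∧
        (((eta/(2*lam0)) • Rop oneH + Rop SH : HT T) : ℝ → ℝ) =ᵐ[muT T] v ∧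
        (∫ t in Icc (0:ℝ) T, v t) = q0 ∧
        (∀ ν : ℝ → ℝ, MeasureTheory.MemLp ν 2 (muT T) →
          (∫ t in Icc (0:ℝ) T, ν t) = q0 →
          J ν ≤ J v ∧ (J ν = J v → ν =ᵐ[muT T] v)) := by
  intro eta heta
  have hres : ∀ f : ℝ → ℝ, (∫ t in Icc (0:ℝ) T, f t) = ∫ t, f t ∂(muT T) := fun _ => rfl
  have hc_pos : 0 < c := by rw [hc]; positivity
  -- continuity facts
  have hr1_int : IntegrableOn r1 (Icc 0 T) volume := hr1_cont.integrableOn_Icc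
  have hI_cont : ContinuousOn (fun t => ∫ s in (0:ℝ)..t, r1 s) (Icc 0 T) := by
    have h0 := intervalIntegral.continuousOn_primitive (a := 0) (b := T) hr1_int
    exact h0.congr fun t ht => intervalIntegral.integral_of_le ht.1
  have hxip_cont : ContinuousOn xip (Icc 0 T) := by
    have h1 : ContinuousOn (fun t => Real.exp (∫ s in (0:ℝ)..t, r1 s)) (Icc 0 T) :=
      Real.continuous_exp.comp_continuousOn hI_cont
    exact h1.congr fun t _ => hxip t
  have hxim_cont : ContinuousOn xim (Icc 0 T) := by
    have h1 : ContinuousOn (fun t => Real.exp (-∫ s in (0:ℝ)..t, r1 s)) (Icc 0 T) :=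
      Real.continuous_exp.comp_continuousOn hI_cont.neg
    exact h1.congr fun t _ => hxim t
  have hw_cont : ContinuousOn (fun u => (xim u)^2) (Icc 0 T) := hxim_cont.pow 2
  have hw_int : IntegrableOn (fun u => (xim u)^2) (Icc 0 T) volume := hw_cont.integrableOn_Icc
  have hW_cont : ContinuousOn (fun m => ∫ u in (0:ℝ)..m, (xim u)^2) (Icc 0 T) := by
    have h0 := intervalIntegral.continuousOn_primitive (a := 0) (b := T) hw_int
    exact h0.congr fun m hm => intervalIntegral.integral_of_le hm.1
  have hGW : ∀ t s, G t s = xip t * xip s * ∫ u in (0:ℝ)..(min t s), (xim u)^2 := by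
    intro t s
    rw [hG]
    have h1 : EqOn (fun u => K u t * K u s) (fun u => (xip t * xip s) * (xim u)^2)
        (Set.uIcc 0 (min t s)) := fun u _ => by
      show K u t * K u s = xip t * xip s * (xim u)^2
      rw [hK, hK]; ring
    rw [intervalIntegral.integral_congr h1, intervalIntegral.integral_const_mul]
  -- bounds
  obtain ⟨Cp, hCp⟩ := isCompact_Icc.exists_bound_of_continuousOn hxip_cont
  obtain ⟨Cw, hCw⟩ := isCompact_Icc.exists_bound_of_continuousOn hw_cont
  obtain ⟨CW, hCW⟩ := isCompact_Icc.exists_bound_of_continuousOn hW_cont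
  have h0T : (0:ℝ) ∈ Icc (0:ℝ) T := ⟨le_refl 0, hT.le⟩
  have hCp0 : 0 ≤ Cp := (norm_nonneg _).trans (hCp 0 h0T)
  have hCW0 : 0 ≤ CW := (norm_nonneg _).trans (hCW 0 h0T)
  -- measurability of G on the product
  have hG_cont : ContinuousOn (fun p : ℝ × ℝ => G p.1 p.2) (Icc (0:ℝ) T ×ˢ Icc (0:ℝ) T) := by
    have h1 : ContinuousOn
        (fun p : ℝ × ℝ => xip p.1 * xip p.2 * ∫ u in (0:ℝ)..(min p.1 p.2), (xim u)^2)
        (Icc (0:ℝ) T ×ˢ Icc (0:ℝ) T) := by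
      refine ContinuousOn.mul (ContinuousOn.mul ?_ ?_) ?_
      · exact hxip_cont.comp continuous_fst.continuousOn fun p hp => hp.1
      · exact hxip_cont.comp continuous_snd.continuousOn fun p hp => hp.2
      · refine hW_cont.comp (continuous_fst.min continuous_snd).continuousOn fun p hp => ?_
        exact ⟨le_min hp.1.1 hp.2.1, (min_le_left _ _).trans hp.1.2⟩
    exact h1.congr fun p _ => hGW p.1 p.2
  have hG_meas : AEStronglyMeasurable (fun p : ℝ × ℝ => G p.1 p.2)
      ((muT T).prod (muT T)) := by
    have h1 := hG_cont.aestronglyMeasurable (μ := volume.prod volume)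
      (measurableSet_Icc.prod measurableSet_Icc)
    rw [← Measure.prod_restrict] at h1
    exact h1
  have hG_bd : ∀ t ∈ Icc (0:ℝ) T, ∀ s ∈ Icc (0:ℝ) T, |G t s| ≤ Cp * Cp * CW := by
    intro t ht s hs
    rw [hGW, abs_mul, abs_mul]
    have e1 : |xip t| ≤ Cp := (Real.norm_eq_abs _) ▸ hCp t ht
    have e2 : |xip s| ≤ Cp := (Real.norm_eq_abs _) ▸ hCp s hs
    have hmin : min t s ∈ Icc (0:ℝ) T := ⟨le_min ht.1 hs.1, (min_le_left t s).trans ht.2⟩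
    have e3 : |∫ u in (0:ℝ)..(min t s), (xim u)^2| ≤ CW :=
      (Real.norm_eq_abs _) ▸ hCW (min t s) hmin
    exact mul_le_mul (mul_le_mul e1 e2 (abs_nonneg _) hCp0) e3 (abs_nonneg _) (by positivity)
  -- L² pairing facts
  have hpair : ∀ (f : ℝ → ℝ) (hf : MemLp f 2 (muT T)) (x : HT T),
      ∫ t, f t * x t ∂(muT T) = ⟪hf.toLp f, x⟫ := by
    intro f hf x
    rw [inner_HT]
    refine (integral_congr_ae ((hf.coeFn_toLp).mono fun t ht => ?_)).symm
    show (hf.toLp f : ℝ → ℝ) t * x t = f t * x t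
    rw [ht]
  have hGinner : ∀ (g : ℝ → ℝ) (hg : MemLp g 2 (muT T)),
      (fun t => ∫ s in Icc (0:ℝ) T, G t s * g s) =ᵐ[muT T] (Gop (hg.toLp g) : ℝ → ℝ) := by
    intro g hg
    have h2 : (fun t => ∫ s in Icc (0:ℝ) T, G t s * (hg.toLp g : ℝ → ℝ) s)
        = fun t => ∫ s in Icc (0:ℝ) T, G t s * g s := by
      funext t
      refine integral_congr_ae ((hg.coeFn_toLp).mono fun s hs => ?_)
      show G t s * (hg.toLp g : ℝ → ℝ) s = G t s * g s
      rw [hs]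
    exact h2 ▸ (hGop (hg.toLp g)).symm
  have hGpair : ∀ (f : ℝ → ℝ) (hf : MemLp f 2 (muT T)) (g : ℝ → ℝ) (hg : MemLp g 2 (muT T)),
      ∫ t, (f t * ∫ s in Icc (0:ℝ) T, G t s * g s) ∂(muT T)
        = ⟪hf.toLp f, Gop (hg.toLp g)⟫ := by
    intro f hf g hg
    have h2 : ∫ t, (f t * ∫ s in Icc (0:ℝ) T, G t s * g s) ∂(muT T)
        = ∫ t, f t * (Gop (hg.toLp g) : ℝ → ℝ) t ∂(muT T) := by
      refine integral_congr_ae ((hGinner g hg).mono fun t ht => ?_)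
      show f t * ∫ s in Icc (0:ℝ) T, G t s * g s = f t * (Gop (hg.toLp g) : ℝ → ℝ) t
      rw [← ht]
    rw [h2, hpair f hf]
  -- symmetry of Gop
  have hGsymfun : ∀ t s, G t s = G s t := fun t s => by
    rw [hGW, hGW, min_comm]; ring
  have hGsym : ∀ x y : HT T, ⟪Gop x, y⟫ = ⟪x, Gop y⟫ := by
    intro x y
    have e1 : ∫ t, ((y : ℝ → ℝ) t * ∫ s in Icc (0:ℝ) T, G t s * (x : ℝ → ℝ) s) ∂(muT T)
        = ⟪y, Gop x⟫ := by
      have := hGpair y (Lp.memLp y) x (Lp.memLp x)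
      rwa [Lp.toLp_coeFn, Lp.toLp_coeFn] at this
    have e2 : ∫ t, ((x : ℝ → ℝ) t * ∫ s in Icc (0:ℝ) T, G t s * (y : ℝ → ℝ) s) ∂(muT T)
        = ⟪x, Gop y⟫ := by
      have := hGpair x (Lp.memLp x) y (Lp.memLp y)
      rwa [Lp.toLp_coeFn, Lp.toLp_coeFn] at this
    have e3 : ∫ t, ((y : ℝ → ℝ) t * ∫ s, G t s * (x : ℝ → ℝ) s ∂(muT T)) ∂(muT T)
        = ∫ t, ((x : ℝ → ℝ) t * ∫ s, G t s * (y : ℝ → ℝ) s ∂(muT T)) ∂(muT T) :=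
      sym_pairing T G hGsymfun hG_meas (Cp * Cp * CW) hG_bd y x
        ((Lp.memLp y).integrable one_le_two) ((Lp.memLp x).integrable one_le_two)
    calc ⟪Gop x, y⟫ = ⟪y, Gop x⟫ := real_inner_comm _ _
      _ = ∫ t, ((y : ℝ → ℝ) t * ∫ s, G t s * (x : ℝ → ℝ) s ∂(muT T)) ∂(muT T) := e1.symm
      _ = ∫ t, ((x : ℝ → ℝ) t * ∫ s, G t s * (y : ℝ → ℝ) s ∂(muT T)) ∂(muT T) := e3
      _ = ⟪x, Gop y⟫ := e2
  -- positivity of Gop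
  have hGpsd : ∀ x : HT T, 0 ≤ ⟪x, Gop x⟫ := by
    intro x
    have hxm : MemLp (x : ℝ → ℝ) 2 (muT T) := Lp.memLp x
    have hxint : Integrable (x : ℝ → ℝ) (muT T) := hxm.integrable one_le_two
    have e1 : ⟪x, Gop x⟫
        = ∫ t, ((x : ℝ → ℝ) t * ∫ s in Icc (0:ℝ) T, G t s * (x : ℝ → ℝ) s) ∂(muT T) := by
      have := hGpair x hxm x hxm
      rw [Lp.toLp_coeFn] at this
      exact this.symm
    have hgint : Integrable (fun t => xip t * (x : ℝ → ℝ) t) (muT T) := by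
      refine Integrable.bdd_mul hxint (hxip_cont.aestronglyMeasurable measurableSet_Icc)
        (((ae_memIcc T)).mono fun t ht => hCp t ht)
    have e2 : ∫ t, ((x : ℝ → ℝ) t * ∫ s in Icc (0:ℝ) T, G t s * (x : ℝ → ℝ) s) ∂(muT T)
        = ∫ t, (xip t * x t) *
            ∫ s, (∫ u in Icc (0:ℝ) (min t s), (xim u)^2) * (xip s * x s) ∂(muT T) ∂(muT T) := by
      refine integral_congr_ae ((ae_memIcc T).mono fun t ht => ?_)
      show (x : ℝ → ℝ) t * ∫ s in Icc (0:ℝ) T, G t s * (x : ℝ → ℝ) s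
          = (xip t * x t) *
            ∫ s, (∫ u in Icc (0:ℝ) (min t s), (xim u)^2) * (xip s * x s) ∂(muT T)
      have h3 : ∫ s in Icc (0:ℝ) T, G t s * (x : ℝ → ℝ) s
          = xip t * ∫ s, (∫ u in Icc (0:ℝ) (min t s), (xim u)^2) * (xip s * x s) ∂(muT T) := by
        rw [← integral_const_mul]
        refine integral_congr_ae ((ae_memIcc T).mono fun s hs => ?_)
        show G t s * (x : ℝ → ℝ) s
            = xip t * ((∫ u in Icc (0:ℝ) (min t s), (xim u)^2) * (xip s * x s))
        rw [hGW, intInt_eq_setInt 0 (min t s) (le_min ht.1 hs.1)]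
        ring
      rw [h3]; ring
    rw [e1, e2]
    exact kernel_psd T hT.le (fun u => (xim u)^2) (fun t => xip t * (x : ℝ → ℝ) t)
      (hw_cont.aestronglyMeasurable measurableSet_Icc)
      (fun u _ => sq_nonneg _) Cw
      (fun u hu => (Real.norm_eq_abs _) ▸ hCw u hu) hgint
  -- ingredients about mu
  have hmu_int : Integrable mu (muT T) := hmu.integrable one_le_two
  set Mm : ℝ := ∫ u, |mu u| ∂(muT T) with hMm
  have hPm_meas : AEStronglyMeasurable (fun t => ∫ s in Icc (0:ℝ) t, mu s) (muT T) :=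
    aesm_P T mu hmu_int
  have hPm_bd : ∀ t ∈ Icc (0:ℝ) T, |∫ s in Icc (0:ℝ) t, mu s| ≤ Mm := P_bound T mu hmu_int
  have hGM_meas : AEStronglyMeasurable (fun t => ∫ s in Icc (0:ℝ) T, G t s * mu s) (muT T) := by
    have h1 : AEStronglyMeasurable (fun p : ℝ × ℝ => G p.1 p.2 * mu p.2)
        ((muT T).prod (muT T)) := hG_meas.mul (AEStronglyMeasurable.comp_snd (μ := muT T) hmu.1)
    exact h1.integral_prod_right'
  have hGM_bd : ∀ t ∈ Icc (0:ℝ) T, |∫ s in Icc (0:ℝ) T, G t s * mu s| ≤ Cp * Cp * CW * Mm := by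
    intro t ht
    calc |∫ s in Icc (0:ℝ) T, G t s * mu s| = ‖∫ s, G t s * mu s ∂(muT T)‖ :=
          (Real.norm_eq_abs _).symm
      _ ≤ ∫ s, ‖G t s * mu s‖ ∂(muT T) := norm_integral_le_integral_norm _
      _ ≤ ∫ s, (Cp * Cp * CW) * |mu s| ∂(muT T) := by
          refine integral_mono_of_nonneg (Filter.Eventually.of_forall fun s => norm_nonneg _)
            (hmu_int.abs.const_mul _) ((ae_memIcc T).mono fun s hs => ?_)
          show ‖G t s * mu s‖ ≤ Cp * Cp * CW * |mu s|
          rw [Real.norm_eq_abs, abs_mul]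
          exact mul_le_mul_of_nonneg_right (hG_bd t ht s hs) (abs_nonneg _)
      _ = Cp * Cp * CW * Mm := by rw [integral_const_mul]
  -- the value of J through the Hilbert-space quadratic form
  have hJval : ∀ (ν : ℝ → ℝ) (hν : MemLp ν 2 (muT T)),
      (∫ t in Icc (0:ℝ) T, ν t) = q0 →
      J ν = -lam0 * ⟪hν.toLp ν, hν.toLp ν⟫ - lam0 * c * ⟪hν.toLp ν, Gop (hν.toLp ν)⟫
        + 2 * lam0 * ⟪hν.toLp ν, SH⟫ := by
    intro ν hν hq
    have hq' : ∫ t, ν t ∂(muT T) = q0 := hq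
    have hν_int : Integrable ν (muT T) := hν.integrable one_le_two
    set Mν : ℝ := ∫ u, |ν u| ∂(muT T) with hMν
    have IntP : Integrable (fun t => ν t * ∫ s in Icc (0:ℝ) t, mu s) (muT T) := by
      refine Integrable.mono' (hν_int.abs.mul_const Mm) (hν.1.mul hPm_meas)
        ((ae_memIcc T).mono fun t ht => ?_)
      show ‖ν t * ∫ s in Icc (0:ℝ) t, mu s‖ ≤ |ν t| * Mm
      rw [Real.norm_eq_abs, abs_mul]
      exact mul_le_mul_of_nonneg_left (hPm_bd t ht) (abs_nonneg _)
    have IntGM : Integrable (fun t => ν t * ∫ s in Icc (0:ℝ) T, G t s * mu s) (muT T) := by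
      refine Integrable.mono' (hν_int.abs.mul_const (Cp * Cp * CW * Mm)) (hν.1.mul hGM_meas)
        ((ae_memIcc T).mono fun t ht => ?_)
      show ‖ν t * ∫ s in Icc (0:ℝ) T, G t s * mu s‖ ≤ |ν t| * (Cp * Cp * CW * Mm)
      rw [Real.norm_eq_abs, abs_mul]
      exact mul_le_mul_of_nonneg_left (hGM_bd t ht) (abs_nonneg _)
    have IntPν : Integrable (fun t => (∫ s in Icc (0:ℝ) t, ν s) * mu t) (muT T) := by
      refine Integrable.mono' (hmu_int.abs.const_mul Mν) ((aesm_P T ν hν_int).mul hmu.1)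
        ((ae_memIcc T).mono fun t ht => ?_)
      show ‖(∫ s in Icc (0:ℝ) t, ν s) * mu t‖ ≤ Mν * |mu t|
      rw [Real.norm_eq_abs, abs_mul]
      exact mul_le_mul_of_nonneg_right (P_bound T ν hν_int t ht) (abs_nonneg _)
    -- the four integral identities
    have e_GG : (∫ t in Icc (0:ℝ) T, ν t * ∫ s in Icc (0:ℝ) T, G t s * ν s)
        = ⟪hν.toLp ν, Gop (hν.toLp ν)⟫ := hGpair ν hν ν hν
    have e_nn : (∫ t in Icc (0:ℝ) T, (ν t)^2) = ⟪hν.toLp ν, hν.toLp ν⟫ := by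
      have h1 : ∫ t, (ν t)^2 ∂(muT T) = ∫ t, ν t * (hν.toLp ν : ℝ → ℝ) t ∂(muT T) := by
        refine integral_congr_ae ((hν.coeFn_toLp).mono fun t ht => ?_)
        show (ν t)^2 = ν t * (hν.toLp ν : ℝ → ℝ) t
        rw [ht]; ring
      calc (∫ t in Icc (0:ℝ) T, (ν t)^2) = ∫ t, ν t * (hν.toLp ν : ℝ → ℝ) t ∂(muT T) := h1
        _ = ⟪hν.toLp ν, hν.toLp ν⟫ := hpair ν hν _
    have e_T3 : (∫ t in Icc (0:ℝ) T, (q0 - ∫ s in Icc (0:ℝ) t, ν s) * mu t)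
        = ∫ t, (ν t * ∫ s in Icc (0:ℝ) t, mu s) ∂(muT T) := by
      have h1 : ∫ t, (q0 - ∫ s in Icc (0:ℝ) t, ν s) * mu t ∂(muT T)
          = ∫ t, (q0 * mu t - (∫ s in Icc (0:ℝ) t, ν s) * mu t) ∂(muT T) := by
        refine integral_congr_ae (Filter.Eventually.of_forall fun t => ?_)
        show (q0 - ∫ s in Icc (0:ℝ) t, ν s) * mu t
            = q0 * mu t - (∫ s in Icc (0:ℝ) t, ν s) * mu t
        ring
      have h2 := third_term T ν mu hν_int hmu_int
      calc (∫ t in Icc (0:ℝ) T, (q0 - ∫ s in Icc (0:ℝ) t, ν s) * mu t)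
          = ∫ t, (q0 * mu t - (∫ s in Icc (0:ℝ) t, ν s) * mu t) ∂(muT T) := h1
        _ = (∫ t, q0 * mu t ∂(muT T)) - ∫ t, (∫ s in Icc (0:ℝ) t, ν s) * mu t ∂(muT T) :=
            integral_sub (hmu_int.const_mul q0) IntPν
        _ = q0 * (∫ t, mu t ∂(muT T)) - ((∫ s, ν s ∂(muT T)) * (∫ t, mu t ∂(muT T))
              - ∫ s, ν s * (∫ u in Icc (0:ℝ) s, mu u) ∂(muT T)) := by
            rw [integral_const_mul, h2]
        _ = ∫ t, (ν t * ∫ s in Icc (0:ℝ) t, mu s) ∂(muT T) := by rw [hq']; ring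
    have e_S : ⟪hν.toLp ν, SH⟫
        = (1/(2*lam0)) * (∫ t, (ν t * ∫ s in Icc (0:ℝ) t, mu s) ∂(muT T))
          + (kap1/(4*lam1*lam0)) * (∫ t in Icc (0:ℝ) T, ν t * ∫ s in Icc (0:ℝ) T, G t s * mu s) := by
      have h1 : ⟪hν.toLp ν, SH⟫ = ∫ t, ν t * Sfun t ∂(muT T) := by
        rw [← hpair ν hν SH]
        refine integral_congr_ae (hSH.mono fun t ht => ?_)
        show ν t * (SH : ℝ → ℝ) t = ν t * Sfun t
        rw [ht]
      have h2 : ∫ t, ν t * Sfun t ∂(muT T)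
          = ∫ t, ((1/(2*lam0)) * (ν t * ∫ s in Icc (0:ℝ) t, mu s)
              + (kap1/(4*lam1*lam0)) * (ν t * ∫ s in Icc (0:ℝ) T, G t s * mu s)) ∂(muT T) := by
        refine integral_congr_ae (Filter.Eventually.of_forall fun t => ?_)
        show ν t * Sfun t = (1/(2*lam0)) * (ν t * ∫ s in Icc (0:ℝ) t, mu s)
            + (kap1/(4*lam1*lam0)) * (ν t * ∫ s in Icc (0:ℝ) T, G t s * mu s)
        rw [hSfun t]; ring
      rw [h1, h2, integral_add (IntP.const_mul _) (IntGM.const_mul _),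
        integral_const_mul, integral_const_mul]
      rfl
    have hκκ : kap1 * kap0 = 2 * lam1 * lam0 * c := by
      rw [hc]; field_simp
    rw [hJ ν, e_GG, e_nn, e_T3, e_S, hκκ]
    field_simp
    ring
  -- the candidate optimizer
  set a : ℝ := eta / (2 * lam0) with ha
  set vH : HT T := a • Rop oneH + Rop SH with hvH
  have hAR : ∀ x : HT T, Rop x + c • Gop (Rop x) = x := by
    intro x
    have h1 := congrArg (fun (L : HT T →L[ℝ] HT T) => L x) hRop_right
    simpa [ContinuousLinearMap.comp_apply, ContinuousLinearMap.add_apply,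
      ContinuousLinearMap.smul_apply, ContinuousLinearMap.one_apply] using h1
  have hAv : vH + c • Gop vH = a • oneH + SH := by
    rw [hvH, map_add, _root_.map_smul, smul_add]
    have h1 : a • Rop oneH + Rop SH + (c • a • Gop (Rop oneH) + c • Gop (Rop SH))
        = a • (Rop oneH + c • Gop (Rop oneH)) + (Rop SH + c • Gop (Rop SH)) := by
      module
    rw [h1, hAR oneH, hAR SH]
  -- positivity of ⟪Rop oneH, oneH⟫
  have hOne_inner : ⟪oneH, oneH⟫ = T := by
    rw [inner_HT]
    have h1 : ∫ x, (oneH : ℝ → ℝ) x * oneH x ∂(muT T) = ∫ _x, (1:ℝ) ∂(muT T) := by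
      refine integral_congr_ae (honeH.mono fun x hx => ?_)
      show (oneH : ℝ → ℝ) x * oneH x = 1
      rw [hx]; norm_num
    rw [h1, integral_const, smul_eq_mul, mul_one]
    show ((muT T) univ).toReal = T
    rw [muT, Measure.restrict_apply_univ, Real.volume_Icc, sub_zero,
      ENNReal.toReal_ofReal hT.le]
  have hone_ne : oneH ≠ 0 := by
    intro h
    rw [h, inner_zero_left] at hOne_inner
    exact absurd hOne_inner.symm (ne_of_gt hT)
  have hy_ne : Rop oneH ≠ 0 := by
    intro h
    apply hone_ne
    have h2 := hAR oneH
    rw [h] at h2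
    simpa using h2.symm
  have hR11 : 0 < ⟪Rop oneH, oneH⟫ := by
    have h1 : ⟪Rop oneH, oneH⟫
        = ⟪Rop oneH, Rop oneH⟫ + c * ⟪Rop oneH, Gop (Rop oneH)⟫ := by
      nth_rewrite 2 [← hAR oneH]
      rw [inner_add_right, real_inner_smul_right]
    rw [h1]
    have h2 : 0 < ⟪Rop oneH, Rop oneH⟫ := by
      rw [real_inner_self_eq_norm_mul_norm]
      have := norm_pos_iff.mpr hy_ne
      positivity
    have h3 : 0 ≤ ⟪Rop oneH, Gop (Rop oneH)⟫ := hGpsd (Rop oneH)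
    nlinarith
  -- the constraint for v
  have hv_one : ⟪vH, oneH⟫ = q0 := by
    rw [hvH, inner_add_left, real_inner_smul_left, ha, heta]
    field_simp
    ring
  have hv_q : (∫ t in Icc (0:ℝ) T, (vH : ℝ → ℝ) t) = q0 := by
    have h1 : ∫ t, (vH : ℝ → ℝ) t ∂(muT T) = ⟪vH, oneH⟫ := by
      rw [inner_HT]
      refine integral_congr_ae (honeH.mono fun t ht => ?_)
      show (vH : ℝ → ℝ) t = (vH : ℝ → ℝ) t * oneH t
      rw [ht, mul_one]
    calc (∫ t in Icc (0:ℝ) T, (vH : ℝ → ℝ) t) = ⟪vH, oneH⟫ := h1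
      _ = q0 := hv_one
  refine ⟨(vH : ℝ → ℝ), Lp.memLp vH, Filter.EventuallyEq.rfl, hv_q, ?_⟩
  intro ν hν hq
  set νL : HT T := hν.toLp ν with hνL
  set hd : HT T := νL - vH with hhd
  have hx : νL = vH + hd := by rw [hhd]; abel
  have hν_one : ⟪νL, oneH⟫ = q0 := by
    have h1 : ∫ t, ν t * oneH t ∂(muT T) = ∫ t, ν t ∂(muT T) := by
      refine integral_congr_ae (honeH.mono fun t ht => ?_)
      show ν t * (oneH : ℝ → ℝ) t = ν t
      rw [ht, mul_one]
    rw [hνL, ← hpair ν hν oneH, h1]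
    exact hq
  have hd_one : ⟪hd, oneH⟫ = 0 := by
    rw [hhd, inner_sub_left, hν_one, hv_one, sub_self]
  have e1 : ⟪νL, νL⟫ = ⟪vH, vH⟫ + 2 * ⟪vH, hd⟫ + ⟪hd, hd⟫ := by
    rw [hx]; exact real_inner_add_add_self _ _
  have e2 : ⟪νL, Gop νL⟫ = ⟪vH, Gop vH⟫ + 2 * ⟪hd, Gop vH⟫ + ⟪hd, Gop hd⟫ := by
    rw [hx, map_add, inner_add_left, inner_add_right, inner_add_right]
    have hsw : ⟪vH, Gop hd⟫ = ⟪hd, Gop vH⟫ := by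
      rw [← hGsym vH hd, real_inner_comm]
    rw [hsw]; ring
  have e3 : ⟪νL, SH⟫ = ⟪vH, SH⟫ + ⟪hd, SH⟫ := by rw [hx, inner_add_left]
  have e4 : ⟪hd, vH⟫ + c * ⟪hd, Gop vH⟫ = ⟪hd, SH⟫ := by
    have h5 : ⟪hd, vH + c • Gop vH⟫ = ⟪hd, a • oneH + SH⟫ := by rw [hAv]
    simp only [inner_add_right, real_inner_smul_right, hd_one, mul_zero, add_zero,
      zero_add] at h5
    exact h5
  have e5 : ⟪vH, hd⟫ = ⟪hd, vH⟫ := real_inner_comm _ _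
  have hJν : J ν = -lam0 * ⟪νL, νL⟫ - lam0 * c * ⟪νL, Gop νL⟫ + 2 * lam0 * ⟪νL, SH⟫ :=
    hJval ν hν hq
  have hJv : J (vH : ℝ → ℝ) = -lam0 * ⟪vH, vH⟫ - lam0 * c * ⟪vH, Gop vH⟫
      + 2 * lam0 * ⟪vH, SH⟫ := by
    have h1 := hJval (vH : ℝ → ℝ) (Lp.memLp vH) hv_q
    rwa [Lp.toLp_coeFn] at h1
  have hkey : J ν = J (vH : ℝ → ℝ) - lam0 * (⟪hd, hd⟫ + c * ⟪hd, Gop hd⟫) := by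
    rw [hJν, hJv]
    linear_combination (-lam0) * e1 - lam0 * c * e2 + 2 * lam0 * e3
      - 2 * lam0 * e4 - 2 * lam0 * e5
  have hDpos : 0 ≤ ⟪hd, hd⟫ + c * ⟪hd, Gop hd⟫ :=
    add_nonneg real_inner_self_nonneg (mul_nonneg hc_pos.le (hGpsd hd))
  constructor
  · nlinarith [mul_nonneg hlam0.le hDpos]
  · intro hEq
    have h7 : lam0 * (⟪hd, hd⟫ + c * ⟪hd, Gop hd⟫) = 0 := by linarith
    have h8 : ⟪hd, hd⟫ + c * ⟪hd, Gop hd⟫ = 0 := by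
      rcases mul_eq_zero.mp h7 with h | h
      · exact absurd h hlam0.ne'
      · exact h
    have h9 : ⟪hd, hd⟫ = 0 := by
      have := mul_nonneg hc_pos.le (hGpsd hd)
      have h00 : (0:ℝ) ≤ ⟪hd, hd⟫ := real_inner_self_nonneg
      linarith
    have h10 : hd = 0 := by
      rwa [inner_self_eq_zero] at h9
    have h11 : νL = vH := by
      have := sub_eq_zero.mp (hhd ▸ h10)
      exact this
    exact (hν.coeFn_toLp).symm.trans (by rw [← hνL, h11])
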